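/- arXiv:2102.02753 — 2 statements merged into one kernel-verified Lean document; each statement's English description precedes it below -/
import Mathlib

section
/- If a knowledge base (P,B) admits a finite universal model, then there exists a finite instance-dependent trigger graph G for (P,B), i.e., a finite acyclic execution graph with G(B) logically equivalent (for Boolean CQ answering) to (P,B). -/
set_option maxHeartbeats 1000000

namespace TGpaper

attribute [local instance] Classical.propDecidable

/-! ### Basic syntax: atoms over variables (for rules), ground terms, facts -/

/-- An atom over variables only, as used in rules of the form (1) in the paper. -/
structure RAtom where
  pred : ℕ
  args : List ℕ

/-- An existential rule with a single head atom; variables of the head not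
occurring in the body are (implicitly) existentially quantified. -/
structure Rule where
  body : List RAtom
  head : RAtom

/-- Ground terms: constants, or labelled nulls.  A null is labelled by the rule
and the images of the body variables of the trigger that created it, together
with the existential variable it stands for. -/
inductive GTerm where
  | const : ℕ → GTerm
  | null : Rule → List GTerm → ℕ → GTerm

/-- A fact: an atom over ground terms. -/
structure GFact where
  pred : ℕ
  args : List GTerm

def GTerm.isConst : GTerm → Prop
  | .const _ => True
  | _ => False

def GTerm.isNull : GTerm → Prop
  | .null _ _ _ => True
  | _ => False

/-- Depth of a term: constants have depth 1, a null has depth one plus the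
maximal depth of the terms in the range of the trigger that created it. -/
def GTerm.depth : GTerm → ℕ
  | .const _ => 1
  | .null _ ts _ => 1 + (ts.attach.map (fun t => t.1.depth)).foldr max 0
decreasing_by
  have := List.sizeOf_lt_of_mem t.2
  simp only [GTerm.null.sizeOf_spec]
  omega

/-- Renaming all constants by a bijection `g`, leaving the null structure intact. -/
def GTerm.renameConst (g : ℕ ≃ ℕ) : GTerm → GTerm
  | .const c => .const (g c)
  | .null r ts z => .null r (ts.attach.map (fun t => t.1.renameConst g)) z
decreasing_by
  have := List.sizeOf_lt_of_mem t.2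
  simp only [GTerm.null.sizeOf_spec]
  omega

def applyRAtom (h : ℕ → GTerm) (a : RAtom) : GFact := ⟨a.pred, a.args.map h⟩

def GFact.mapT (σ : GTerm → GTerm) (f : GFact) : GFact := ⟨f.pred, f.args.map σ⟩

def GFact.constOnly (f : GFact) : Prop := ∀ t ∈ f.args, t.isConst

/-- A null-free instance. -/
def NullFree (I : Set GFact) : Prop := ∀ f ∈ I, f.constOnly

/-- A base instance w.r.t. a set `EP` of extensional predicates. -/
def BaseInstance (EP : Set ℕ) (B : Set GFact) : Prop :=
  ∀ f ∈ B, f.pred ∈ EP ∧ f.constOnly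

/-! ### Homomorphisms -/

/-- `σ` is a homomorphism from the set of facts `A` into `B`: it fixes all
constants (hence maps nulls to ground terms) and maps each fact of `A` into `B`. -/
def isHom (σ : GTerm → GTerm) (A B : Set GFact) : Prop :=
  (∀ c, σ (GTerm.const c) = GTerm.const c) ∧ ∀ f ∈ A, f.mapT σ ∈ B

/-- `homEntails B A` : `B ⊨ A`, i.e. there is a homomorphism from `A` into `B`. -/
def homEntails (B A : Set GFact) : Prop := ∃ σ, isHom σ A B

def homEquiv (A B : Set GFact) : Prop := homEntails A B ∧ homEntails B A

/-! ### Rules, programs, models -/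

def Rule.bodyVars (r : Rule) : List ℕ := r.body.flatMap RAtom.args

def Rule.isLinear (r : Rule) : Prop := r.body.length = 1

def Rule.isDatalog (r : Rule) : Prop := ∀ x ∈ r.head.args, x ∈ r.bodyVars

def Rule.extensionalBody (EP : Set ℕ) (r : Rule) : Prop := ∀ a ∈ r.body, a.pred ∈ EP

def Rule.intensionalBody (EP : Set ℕ) (r : Rule) : Prop := ∀ a ∈ r.body, a.pred ∉ EP

/-- Well-formed program: head predicates are intensional and each body consists
exclusively of extensional predicates or exclusively of intensional ones. -/
def ProgramWF (EP : Set ℕ) (P : Set Rule) : Prop :=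
  ∀ r ∈ P, r.head.pred ∉ EP ∧ (r.extensionalBody EP ∨ r.intensionalBody EP)

/-- A rule holds in an instance `I`. -/
def ruleSat (r : Rule) (I : Set GFact) : Prop :=
  ∀ h : ℕ → GTerm, (∀ a ∈ r.body, applyRAtom h a ∈ I) →
    ∃ h' : ℕ → GTerm, (∀ x ∈ r.bodyVars, h' x = h x) ∧ applyRAtom h' r.head ∈ I

def isModel (P : Set Rule) (B I : Set GFact) : Prop := B ⊆ I ∧ ∀ r ∈ P, ruleSat r I

def isUniversalModel (P : Set Rule) (B M : Set GFact) : Prop :=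
  isModel P B M ∧ ∀ I, isModel P B I → homEntails I M

/-! ### Conjunctive queries -/

inductive VTerm where
  | const : ℕ → VTerm
  | var : ℕ → VTerm

/-- A (null-free) atom over constants and variables, as used in queries. -/
structure VAtom where
  pred : ℕ
  args : List VTerm

def applyVAtom (h : ℕ → GTerm) (a : VAtom) : GFact :=
  ⟨a.pred, a.args.map (fun t => match t with | .const c => .const c | .var x => h x)⟩

/-- A conjunctive query with head variables `head` and body `body`. -/
structure CQ where
  head : List ℕ
  body : List VAtom

/-- `t` is an answer to `Q` on the instance `I`. -/
def isAnswer (Q : CQ) (I : Set GFact) (t : List GTerm) : Prop :=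
  ∃ h : ℕ → GTerm, Q.head.map h = t ∧ ∀ a ∈ Q.body, applyVAtom h a ∈ I

def cqContained (Q1 Q2 : CQ) : Prop := ∀ I t, isAnswer Q1 I t → isAnswer Q2 I t

/-- A Boolean conjunctive query is just a body. -/
abbrev BCQ := List VAtom

def satBCQ (I : Set GFact) (Q : BCQ) : Prop := ∃ h : ℕ → GTerm, ∀ a ∈ Q, applyVAtom h a ∈ I

/-- `(P,B) ⊨ Q` : `Q` holds in every model of the knowledge base. -/
def kbEntailsBCQ (P : Set Rule) (B : Set GFact) (Q : BCQ) : Prop :=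
  ∀ I, isModel P B I → satBCQ I Q

/-! ### The (breadth-first, equivalent) chase -/

/-- Canonical extension of a trigger `h`, sending existential variables to
fresh labelled nulls. -/
def Rule.canon (r : Rule) (h : ℕ → GTerm) : ℕ → GTerm :=
  fun x => if x ∈ r.bodyVars then h x else GTerm.null r (r.bodyVars.map h) x

/-- One (oblivious, breadth-first) chase round over `I`. -/
def chaseStep (P : Set Rule) (I : Set GFact) : Set GFact :=
  I ∪ { f | ∃ r ∈ P, ∃ h : ℕ → GTerm,
        (∀ a ∈ r.body, applyRAtom h a ∈ I) ∧ f = applyRAtom (r.canon h) r.head }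

/-- `Step P B i` : the instance produced by the `i`-th round of the
breadth-first chase; the chase stops (stays put) as soon as the result of a
round is entailed by the previous instance (the "equivalent chase"). -/
noncomputable def Step (P : Set Rule) (B : Set GFact) : ℕ → Set GFact
  | 0 => B
  | n + 1 =>
      if homEntails (Step P B n) (chaseStep P (Step P B n)) then Step P B n
      else chaseStep P (Step P B n)

/-- The (possibly infinite) result of the chase. -/
def ChaseResult (P : Set Rule) (B : Set GFact) : Set GFact := ⋃ n, Step P B n


/-! ### Execution graphs -/

/-- An execution graph: finitely many nodes `Fin n`, each labelled with a
rule; `parent v i` is the node feeding the `i`-th body atom of `v` (if any).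
Acyclicity is enforced by requiring parents to have smaller indices
(a topological ordering). -/
structure EG where
  n : ℕ
  rul : Fin n → Rule
  parent : Fin n → ℕ → Option (Fin n)
  topo : ∀ v i u, parent v i = some u → u < v

/-- Output of a rule given, for each body position, the instance over which
that body atom is evaluated (Definition of guided evaluation). -/
def nodeOut (r : Rule) (inp : ℕ → Set GFact) : Set GFact :=
  { f | ∃ h : ℕ → GTerm,
      (∀ i : Fin r.body.length, applyRAtom h (r.body.get i) ∈ inp i.val) ∧
      f = applyRAtom (r.canon h) r.head }

/-- `G.eval B v` : the set of facts `v(B)` computed at node `v` when reasoning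
over the graph with base instance `B`. -/
def EG.eval (G : EG) (B : Set GFact) (v : Fin G.n) : Set GFact :=
  nodeOut (G.rul v) (fun i =>
    match hp : G.parent v i with
    | some u => G.eval B u
    | none => B)
termination_by v.val
decreasing_by exact G.topo _ _ _ hp

/-- The instance feeding body position `i` of node `v`. -/
def EG.inp (G : EG) (B : Set GFact) (v : Fin G.n) (i : ℕ) : Set GFact :=
  match G.parent v i with
  | some u => G.eval B u
  | none => B

/-- `G(B)`. -/
def EG.result (G : EG) (B : Set GFact) : Set GFact := B ∪ ⋃ v, G.eval B v

/-- Well-formedness of an execution graph w.r.t. extensional predicates `EP`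
and program `P`: nodes are labelled with rules of `P`; a body position has a
parent iff its predicate is intensional, and the parent's head predicate
matches; there are no edges beyond the body positions. -/
def EG.WF (EP : Set ℕ) (P : Set Rule) (G : EG) : Prop :=
  (∀ v, G.rul v ∈ P) ∧
  (∀ (v : Fin G.n) (i : Fin (G.rul v).body.length),
      (((G.rul v).body.get i).pred ∈ EP ↔ G.parent v i.val = none) ∧
      ∀ u, G.parent v i.val = some u →
        (G.rul u).head.pred = ((G.rul v).body.get i).pred) ∧
  (∀ v i, (G.rul v).body.length ≤ i → G.parent v i = none)

/-- `G` is an (instance-independent) trigger graph for `P`. -/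
def EG.IsTGFor (EP : Set ℕ) (P : Set Rule) (G : EG) : Prop :=
  ∀ B, BaseInstance EP B → ∀ Q : BCQ, kbEntailsBCQ P B Q ↔ satBCQ (G.result B) Q

/-- `G` is an (instance-dependent) trigger graph for the KB `(P,B)`. -/
def EG.IsTGForKB (P : Set Rule) (B : Set GFact) (G : EG) : Prop :=
  ∀ Q : BCQ, kbEntailsBCQ P B Q ↔ satBCQ (G.result B) Q

def EG.edgeRel (G : EG) (u v : Fin G.n) : Prop := ∃ i, G.parent v i = some u

/-- The depth of `G` (the length of its longest path) is at most `k`: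
every directed path visits at most `k+1` nodes. -/
def EG.depthLE (G : EG) (k : ℕ) : Prop :=
  ∀ l : List (Fin G.n), l.Chain' G.edgeRel → l.length ≤ k + 1

/-- The depth of a node: the length of the longest path ending in it. -/
noncomputable def EG.nodeDepth (G : EG) (v : Fin G.n) : ℕ :=
  (Finset.univ.filter fun u : Fin G.n => ∃ i, G.parent v i = some u).attach.sup
    fun u => G.nodeDepth u.1 + 1
termination_by v.val
decreasing_by
  obtain ⟨i, hi⟩ := (Finset.mem_filter.mp u.2).2
  exact G.topo _ _ _ hi

/-- `G` is (a graph containing) the level-`k` full execution graph of `P`: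
it is well-formed, all its nodes live at levels `≤ k` (roots at level 1), it
has a (root) node for every extensional rule, and for every level `2 ≤ l ≤ k`,
every intensional rule `r` and every `l`-compatible combination of nodes it
has a node for `r` with exactly those parents. -/
def EG.IsFullEG (EP : Set ℕ) (P : Set Rule) (k : ℕ) (G : EG) : Prop :=
  G.WF EP P ∧
  (∀ v, G.nodeDepth v + 1 ≤ k) ∧
  (1 ≤ k → ∀ r ∈ P, r.extensionalBody EP →
      ∃ v, G.rul v = r ∧ ∀ i, G.parent v i = none) ∧
  (∀ l, 2 ≤ l → l ≤ k → ∀ r ∈ P, r.intensionalBody EP →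
      ∀ u : Fin r.body.length → Fin G.n,
        (∀ i, (G.rul (u i)).head.pred = (r.body.get i).pred) →
        (∀ i, G.nodeDepth (u i) + 1 < l) →
        (∃ i, G.nodeDepth (u i) + 2 = l) →
        ∃ v, G.rul v = r ∧
          (∀ i : Fin r.body.length, G.parent v i.val = some (u i)) ∧
          (∀ j, r.body.length ≤ j → G.parent v j = none))

/-! ### Preserving homomorphisms and node removal -/

def EG.ancestor (G : EG) (w v : Fin G.n) : Prop := Relation.TransGen G.edgeRel w v

def occursIn (t : GTerm) (I : Set GFact) : Prop := ∃ f ∈ I, t ∈ f.args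

/-- A preserving homomorphism from `u(B)` into `v(B)`: a homomorphism mapping
to itself every null that occurs in `w(B)` for some ancestor `w` of `u`. -/
def EG.preservingHom (G : EG) (B : Set GFact) (u v : Fin G.n) (σ : GTerm → GTerm) : Prop :=
  isHom σ (G.eval B u) (G.eval B v) ∧
  ∀ t, t.isNull → (∃ w, G.ancestor w u ∧ occursIn t (G.eval B w)) → σ t = t

/-- `G'` is the graph obtained from `G` by removing node `u` and redirecting
every edge `u →ᵢ w` to `v →ᵢ w` (up to a renaming `ι` of the node indices). -/
def RemoveRedirect (G : EG) (u v : Fin G.n) (G' : EG) : Prop :=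
  ∃ ι : Fin G'.n → Fin G.n,
    Function.Injective ι ∧ (∀ w, ι w ≠ u) ∧ (∀ w : Fin G.n, w ≠ u → ∃ w', ι w' = w) ∧
    (∀ w', G'.rul w' = G.rul (ι w')) ∧
    (∀ w' i, G'.parent w' i = none ↔ G.parent (ι w') i = none) ∧
    (∀ w' i p', G'.parent w' i = some p' ↔
      ((G.parent (ι w') i = some u ∧ ι p' = v) ∨
       (ι p' ≠ u ∧ G.parent (ι w') i = some (ι p'))))

/-! ### Pattern isomorphism -/

def GFact.renameC (g : ℕ ≃ ℕ) (f : GFact) : GFact := f.mapT (GTerm.renameConst g)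

/-- Two facts are pattern-isomorphic: same predicate, and a bijection on
constants maps one to the other. -/
def patternIso (f1 f2 : GFact) : Prop := ∃ g : ℕ ≃ ℕ, f2 = f1.renameC g

def predsOfProg (P : Set Rule) : Set ℕ :=
  { p | ∃ r ∈ P, p = r.head.pred ∨ ∃ a ∈ r.body, p = a.pred }

/-- `HP` is a set of representatives of the pattern-isomorphism classes of the
(constant-only) facts over the extensional predicates of `P`. -/
def IsRepSet (EP : Set ℕ) (P : Set Rule) (HP : Set GFact) : Prop :=
  (∀ f ∈ HP, f.pred ∈ EP ∧ f.pred ∈ predsOfProg P ∧ f.constOnly) ∧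
  (∀ f : GFact, f.pred ∈ EP → f.pred ∈ predsOfProg P → f.constOnly →
    ∃ f' ∈ HP, patternIso f f')

/-! ### EG-rewritings for Datalog -/

def applyVSub (θ : ℕ → ℕ) (a : RAtom) : RAtom := ⟨a.pred, a.args.map θ⟩

/-- `θ` is a most general unifier of the (variable-only) atoms `a` and `b`. -/
def IsMGU (a b : RAtom) (θ : ℕ → ℕ) : Prop :=
  applyVSub θ a = applyVSub θ b ∧
  ∀ σ : ℕ → GTerm, applyRAtom σ a = applyRAtom σ b →
    ∃ σ' : ℕ → GTerm, ∀ x, σ x = σ' (θ x)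

/-- A state of the rewriting procedure: head variables plus body atoms, each
tagged with the node of the graph it is associated with (`none` for
extensional atoms). -/
structure QState (G : EG) where
  headVars : List ℕ
  atoms : List (RAtom × Option (Fin G.n))

def stateVars {G : EG} (q : QState G) : Set ℕ :=
  { x | x ∈ q.headVars ∨ ∃ p ∈ q.atoms, x ∈ p.1.args }

/-- One rewriting step: pick an atom `a` associated with node `u`, rename the
rule of `u` apart, unify its head with `a` via an MGU `θ`, replace `a` by the
(renamed) body of the rule of `u` (tagging positions by the parents of `u`)
and apply `θ` everywhere. -/
def RewStep (G : EG) (q q' : QState G) : Prop :=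
  ∃ (pre post : List (RAtom × Option (Fin G.n))) (a : RAtom) (u : Fin G.n)
    (ρ θ : ℕ → ℕ),
    q.atoms = pre ++ (a, some u) :: post ∧
    Function.Injective ρ ∧ (∀ x, ρ x ∉ stateVars q) ∧
    IsMGU (applyVSub ρ (G.rul u).head) a θ ∧
    q'.headVars = q.headVars.map θ ∧
    q'.atoms =
      pre.map (fun p => (applyVSub θ p.1, p.2)) ++
      List.ofFn (fun i : Fin (G.rul u).body.length =>
        (applyVSub θ (applyVSub ρ ((G.rul u).body.get i)), G.parent u i.val)) ++
      post.map (fun p => (applyVSub θ p.1, p.2))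

def initState (G : EG) (v : Fin G.n) : QState G :=
  ⟨(G.rul v).head.args, [((G.rul v).head, some v)]⟩

def RewTerminal {G : EG} (q : QState G) : Prop := ∀ p ∈ q.atoms, p.2 = none

/-- `q` is the EG-rewriting of node `v` in `G`. -/
def IsEGRewriting (G : EG) (v : Fin G.n) (q : QState G) : Prop :=
  Relation.ReflTransGen (RewStep G) (initState G v) q ∧ RewTerminal q

/-- `t` is an answer to (the CQ represented by) the state `q` on instance `I`. -/
def stateAnswer {G : EG} (q : QState G) (I : Set GFact) (t : List GTerm) : Prop :=
  ∃ σ : ℕ → GTerm, q.headVars.map σ = t ∧ ∀ p ∈ q.atoms, applyRAtom σ p.1 ∈ I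

/-- The guard `l` is a subset of the atoms of the rewriting `q` whose
variables cover all head variables of `q`. -/
def GuardOK {G : EG} (q : QState G) (l : List RAtom) : Prop :=
  (∀ a ∈ l, ∃ o, (a, o) ∈ q.atoms) ∧ (∀ y ∈ q.headVars, ∃ a ∈ l, y ∈ a.args)

/-- Optimized node evaluation `v(B, I)` guided by a guard subquery of the
EG-rewriting `q` of `v` (Definition of the optimized rule execution
strategy). -/
def EG.evalOpt (G : EG) (B I : Set GFact) (v : Fin G.n) (q : QState G)
    (l : List RAtom) : Set GFact :=
  { f | ∃ h : ℕ → GTerm,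
      (∀ i : Fin (G.rul v).body.length,
          applyRAtom h ((G.rul v).body.get i) ∈ G.inp B v i.val) ∧
      f = applyRAtom ((G.rul v).canon h) (G.rul v).head ∧
      (∃ σ : ℕ → GTerm,
          q.headVars.map σ = (G.rul v).head.args.map ((G.rul v).canon h) ∧
          ∀ a ∈ l, applyRAtom σ a ∈ B) ∧
      f ∉ I }

/-- One step of `minDatalog`: remove a node `v` whose EG-rewriting is
contained in the EG-rewriting of a node `u` (with the same head predicate and
depth at most that of `v`), redirecting the outgoing edges of `v` to `u`. -/
def MinRemoveStep (G G' : EG) : Prop :=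
  ∃ u v : Fin G.n, u ≠ v ∧ (G.rul u).head.pred = (G.rul v).head.pred ∧
    G.nodeDepth u ≤ G.nodeDepth v ∧
    (∃ qu qv, IsEGRewriting G u qu ∧ IsEGRewriting G v qv ∧
      ∀ I t, stateAnswer qv I t → stateAnswer qu I t) ∧
    RemoveRedirect G v u G'

/-! ### First-order semantics for facts with nulls -/

structure FOStruct where
  Dom : Type
  constI : ℕ → Dom
  predI : ℕ → List Dom → Prop

def evalGTerm (M : FOStruct) (ν : GTerm → M.Dom) : GTerm → M.Dom
  | .const c => M.constI c
  | t => ν t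

/-- `M` satisfies the existential closure of the set of facts `A`
(nulls behave as existentially quantified variables). -/
def satisfiesEx (M : FOStruct) (A : Set GFact) : Prop :=
  ∃ ν : GTerm → M.Dom, ∀ f ∈ A, M.predI f.pred (f.args.map (evalGTerm M ν))

/-- `A2 ⊨ A1` (first-order logical entailment of existential closures). -/
def foEntails (A2 A1 : Set GFact) : Prop :=
  ∀ M : FOStruct, satisfiesEx M A2 → satisfiesEx M A1

/-! ### Miscellaneous -/

def constsOf (I : Set GFact) : Set ℕ := { c | ∃ f ∈ I, GTerm.const c ∈ f.args }

def predsOf (I : Set GFact) : Set ℕ := { p | ∃ f ∈ I, f.pred = p }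

/-- All facts of `B` and all atoms of `P` respect the arity function `ar`. -/
def respectsArity (ar : ℕ → ℕ) (P : Set Rule) (B : Set GFact) : Prop :=
  (∀ f ∈ B, f.args.length = ar f.pred) ∧
  ∀ r ∈ P, r.head.args.length = ar r.head.pred ∧ ∀ a ∈ r.body, a.args.length = ar a.pred



/-! ### Auxiliary development -/

inductive Der (P : Set Rule) (B : Set GFact) : GFact → Prop
  | base {f : GFact} : f ∈ B → Der P B f
  | step {r : Rule} {h : ℕ → GTerm} : r ∈ P →
      (∀ a ∈ r.body, Der P B (applyRAtom h a)) →
      Der P B (applyRAtom (r.canon h) r.head)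

lemma canon_eq_of_mem (r : Rule) (h : ℕ → GTerm) {x : ℕ} (hx : x ∈ r.bodyVars) :
    r.canon h x = h x := by simp [Rule.canon, hx]

lemma canon_eq_of_not_mem (r : Rule) (h : ℕ → GTerm) {x : ℕ} (hx : x ∉ r.bodyVars) :
    r.canon h x = GTerm.null r (r.bodyVars.map h) x := by simp [Rule.canon, hx]

lemma derSet_model (P : Set Rule) (B : Set GFact) : isModel P B {f | Der P B f} := by
  refine ⟨fun f hf => Der.base hf, fun r hr h hb => ?_⟩
  exact ⟨r.canon h, fun x hx => canon_eq_of_mem r h hx, Der.step hr hb⟩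

instance : Nonempty GTerm := ⟨.const 0⟩

noncomputable def soundMap (I : Set GFact) : GTerm → GTerm
  | .const c => .const c
  | .null r ts _x =>
      Classical.epsilon (fun h' : ℕ → GTerm =>
        r.bodyVars.map h' = ts.attach.map (fun t => soundMap I t.1) ∧
        applyRAtom h' r.head ∈ I) _x
decreasing_by
  all_goals
    have := List.sizeOf_lt_of_mem t.2
    simp only [GTerm.null.sizeOf_spec]
    omega

lemma soundMap_const (I : Set GFact) (c : ℕ) : soundMap I (.const c) = .const c := by
  rw [soundMap]

lemma soundMap_null (I : Set GFact) (r : Rule) (ts : List GTerm) (x : ℕ) :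
    soundMap I (GTerm.null r ts x) =
      Classical.epsilon (fun h' : ℕ → GTerm =>
        r.bodyVars.map h' = ts.map (soundMap I) ∧ applyRAtom h' r.head ∈ I) x := by
  rw [soundMap, List.attach_map_val]

lemma mapT_constOnly {σ : GTerm → GTerm} (hσ : ∀ c, σ (GTerm.const c) = GTerm.const c)
    {f : GFact} (hf : f.constOnly) : f.mapT σ = f := by
  unfold GFact.mapT
  have hpt : ∀ t ∈ f.args, σ t = id t := by
    intro t ht
    have := hf t ht
    cases t with
    | const c => exact hσ c
    | null r ts x => exact absurd this (by simp [GTerm.isConst])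
  rw [(List.map_congr_left hpt).trans (List.map_id _)]

lemma applyRAtom_comp (σ : GTerm → GTerm) (h : ℕ → GTerm) (a : RAtom) :
    applyRAtom (fun x => σ (h x)) a = (applyRAtom h a).mapT σ := by
  simp [applyRAtom, GFact.mapT, List.map_map, Function.comp]

lemma sound_der {EP : Set ℕ} {P : Set Rule} {B I : Set GFact}
    (hB : BaseInstance EP B) (hI : isModel P B I) :
    ∀ f, Der P B f → f.mapT (soundMap I) ∈ I := by
  intro f hf
  induction hf with
  | base hfB =>
      rw [mapT_constOnly (soundMap_const I) ((hB _ hfB).2)]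
      exact hI.1 hfB
  | step hr hb ih =>
      rename_i r h
      set σ := soundMap I with hσdef
      have hvars : ∀ a ∈ r.body, ∀ x ∈ a.args, x ∈ r.bodyVars := by
        intro a ha x hx
        exact List.mem_flatMap.mpr ⟨a, ha, hx⟩
      have hbodyI : ∀ a ∈ r.body, applyRAtom (fun y => σ (h y)) a ∈ I := by
        intro a ha; rw [applyRAtom_comp]; exact ih a ha
      set g : ℕ → GTerm := fun y => if y ∈ r.bodyVars then σ (h y) else .const 0 with hg
      have hgbody : ∀ a ∈ r.body, applyRAtom g a ∈ I := by
        intro a ha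
        have e : applyRAtom g a = applyRAtom (fun y => σ (h y)) a := by
          unfold applyRAtom
          congr 1
          apply List.map_congr_left
          intro x hx
          simp [hg, hvars a ha x hx]
        rw [e]; exact hbodyI a ha
      obtain ⟨h', hh'1, hh'2⟩ := hI.2 r hr g hgbody
      have hex : ∃ h'' : ℕ → GTerm,
          r.bodyVars.map h'' = (r.bodyVars.map h).map σ ∧ applyRAtom h'' r.head ∈ I := by
        refine ⟨h', ?_, hh'2⟩
        rw [List.map_map]
        apply List.map_congr_left
        intro y hy
        rw [hh'1 y hy]
        simp [hg, hy]
      set hw := Classical.epsilon (fun h'' : ℕ → GTerm =>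
          r.bodyVars.map h'' = (r.bodyVars.map h).map σ ∧ applyRAtom h'' r.head ∈ I) with hhw
      have hspec := Classical.epsilon_spec hex
      have hwvars : ∀ y ∈ r.bodyVars, hw y = σ (h y) := by
        have e : r.bodyVars.map hw = r.bodyVars.map (fun y => σ (h y)) := by
          rw [hspec.1, List.map_map]
          rfl
        exact List.map_inj_left.mp e
      have efinal : (applyRAtom (r.canon h) r.head).mapT σ = applyRAtom hw r.head := by
        unfold applyRAtom GFact.mapT
        simp only [List.map_map]
        congr 1
        apply List.map_congr_left
        intro y hy
        by_cases hby : y ∈ r.bodyVars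
        · simp only [Function.comp_apply, canon_eq_of_mem r h hby]
          exact (hwvars y hby).symm
        · simp only [Function.comp_apply, canon_eq_of_not_mem r h hby]
          rw [hσdef, soundMap_null, hhw]
      rw [efinal]
      exact hspec.2

lemma EG.eval_def (G : EG) (B : Set GFact) (v : Fin G.n) :
    G.eval B v = nodeOut (G.rul v) (fun i => (G.parent v i).elim B (G.eval B)) := by
  rw [EG.eval]
  apply congrArg
  funext i
  split <;> simp_all

lemma eval_pred {G : EG} {B : Set GFact} {v : Fin G.n} {f : GFact}
    (hf : f ∈ G.eval B v) : f.pred = (G.rul v).head.pred := by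
  rw [EG.eval_def] at hf
  obtain ⟨h, -, rfl⟩ := hf
  rfl

def EGemb (G G' : EG) (ι : Fin G.n → Fin G'.n) : Prop :=
  (∀ v, G'.rul (ι v) = G.rul v) ∧
  (∀ v i, G'.parent (ι v) i = (G.parent v i).map ι)

lemma EGemb.eval {G G' : EG} {ι : Fin G.n → Fin G'.n} (hι : EGemb G G' ι)
    (B : Set GFact) : ∀ v, G'.eval B (ι v) = G.eval B v := by
  have key : ∀ k, ∀ v : Fin G.n, v.val = k → G'.eval B (ι v) = G.eval B v := by
    intro k
    induction k using Nat.strong_induction_on with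
    | _ k ih =>
      intro v hv
      rw [EG.eval_def, EG.eval_def, hι.1]
      apply congrArg
      funext i
      rw [hι.2]
      cases hp : G.parent v i with
      | none => rfl
      | some u => exact ih u.val (hv ▸ G.topo v i u hp) u rfl
  exact fun v => key v.val v rfl

def emptyEG : EG where
  n := 0
  rul v := v.elim0
  parent v _ := v.elim0
  topo v := v.elim0

lemma emptyEG_WF (EP : Set ℕ) (P : Set Rule) : emptyEG.WF EP P :=
  ⟨fun v => v.elim0, fun v => v.elim0, fun v => v.elim0⟩

def EGsum (G1 G2 : EG) : EG where
  n := G1.n + G2.n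
  rul v := if h : v.val < G1.n then G1.rul ⟨v.1, h⟩ else
    G2.rul ⟨v.1 - G1.n, by omega⟩
  parent v i := if h : v.val < G1.n then
      (G1.parent ⟨v.1, h⟩ i).map (fun u => ⟨u.1, by omega⟩)
    else
      (G2.parent ⟨v.1 - G1.n, by omega⟩ i).map (fun u => ⟨u.1 + G1.n, by omega⟩)
  topo := by
    intro v i u hu
    by_cases h : v.val < G1.n
    · rw [dif_pos h] at hu
      obtain ⟨w, hw, rfl⟩ := Option.map_eq_some_iff.mp hu
      have := G1.topo _ _ _ hw
      simp only [Fin.lt_def] at *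
      omega
    · rw [dif_neg h] at hu
      obtain ⟨w, hw, rfl⟩ := Option.map_eq_some_iff.mp hu
      have := G2.topo _ _ _ hw
      simp only [Fin.lt_def] at *
      omega

lemma EGsum_n (G1 G2 : EG) : (EGsum G1 G2).n = G1.n + G2.n := rfl

def sumL (G1 G2 : EG) (u : Fin G1.n) : Fin (EGsum G1 G2).n :=
  ⟨u.1, by rw [EGsum_n]; omega⟩
def sumR (G1 G2 : EG) (u : Fin G2.n) : Fin (EGsum G1 G2).n :=
  ⟨u.1 + G1.n, by rw [EGsum_n]; omega⟩

@[simp] lemma sumL_val (G1 G2 : EG) (u : Fin G1.n) : (sumL G1 G2 u).1 = u.1 := rfl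
@[simp] lemma sumR_val (G1 G2 : EG) (u : Fin G2.n) : (sumR G1 G2 u).1 = u.1 + G1.n := rfl

lemma sum_cases (G1 G2 : EG) (v : Fin (EGsum G1 G2).n) :
    (∃ u, v = sumL G1 G2 u) ∨ (∃ u, v = sumR G1 G2 u) := by
  have hv : v.1 < G1.n + G2.n := v.2
  by_cases h : v.1 < G1.n
  · exact Or.inl ⟨⟨v.1, h⟩, Fin.ext rfl⟩
  · exact Or.inr ⟨⟨v.1 - G1.n, by omega⟩, Fin.ext (by simp; omega)⟩

lemma EGsum_rul_L (G1 G2 : EG) (u : Fin G1.n) :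
    (EGsum G1 G2).rul (sumL G1 G2 u) = G1.rul u := by
  show (if h : (u:ℕ) < G1.n then _ else _) = _
  rw [dif_pos u.2]
  exact congrArg G1.rul (Fin.ext rfl)

lemma EGsum_rul_R (G1 G2 : EG) (u : Fin G2.n) :
    (EGsum G1 G2).rul (sumR G1 G2 u) = G2.rul u := by
  show (if h : (u:ℕ) + G1.n < G1.n then _ else _) = _
  rw [dif_neg (by omega)]
  congr 1
  exact Fin.ext (by simp)

lemma EGsum_parent_L (G1 G2 : EG) (u : Fin G1.n) (i : ℕ) :
    (EGsum G1 G2).parent (sumL G1 G2 u) i = (G1.parent u i).map (sumL G1 G2) := by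
  show (if h : (u:ℕ) < G1.n then _ else _) = _
  exact (dif_pos u.2).trans rfl

lemma EGsum_parent_R (G1 G2 : EG) (u : Fin G2.n) (i : ℕ) :
    (EGsum G1 G2).parent (sumR G1 G2 u) i = (G2.parent u i).map (sumR G1 G2) := by
  show (if h : (u:ℕ) + G1.n < G1.n then _ else _) = _
  refine (dif_neg (by omega)).trans ?_
  have e : ∀ pf : (sumR G1 G2 u : ℕ) - G1.n < G2.n,
      (⟨(sumR G1 G2 u : ℕ) - G1.n, pf⟩ : Fin G2.n) = u := fun pf => Fin.ext (by simp)
  rw [e]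
  rfl

lemma sumL_emb (G1 G2 : EG) : EGemb G1 (EGsum G1 G2) (sumL G1 G2) :=
  ⟨EGsum_rul_L G1 G2, EGsum_parent_L G1 G2⟩

lemma sumR_emb (G1 G2 : EG) : EGemb G2 (EGsum G1 G2) (sumR G1 G2) :=
  ⟨EGsum_rul_R G1 G2, EGsum_parent_R G1 G2⟩

def nodeWF (EP : Set ℕ) (P : Set Rule) (H : EG) (v : Fin H.n) : Prop :=
  H.rul v ∈ P ∧
  (∀ i : Fin (H.rul v).body.length,
      (((H.rul v).body.get i).pred ∈ EP ↔ H.parent v i.val = none) ∧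
      ∀ u, H.parent v i.val = some u →
        (H.rul u).head.pred = ((H.rul v).body.get i).pred) ∧
  (∀ i, (H.rul v).body.length ≤ i → H.parent v i = none)

lemma WF_iff (EP : Set ℕ) (P : Set Rule) (H : EG) :
    H.WF EP P ↔ ∀ v, nodeWF EP P H v := by
  constructor
  · exact fun h v => ⟨h.1 v, h.2.1 v, h.2.2 v⟩
  · exact fun h => ⟨fun v => (h v).1, fun v => (h v).2.1, fun v => (h v).2.2⟩

lemma nodeWF_emb {EP : Set ℕ} {P : Set Rule} {G H : EG} {ι : Fin G.n → Fin H.n}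
    (hemb : EGemb G H ι) {v : Fin G.n} (h : nodeWF EP P G v) :
    nodeWF EP P H (ι v) := by
  unfold nodeWF at *
  rw [hemb.1]
  refine ⟨h.1, fun i => ⟨?_, ?_⟩, fun i hi => ?_⟩
  · rw [hemb.2, (h.2.1 i).1]
    simp [Option.map_eq_none_iff]
  · intro u hu
    rw [hemb.2] at hu
    obtain ⟨w, hw, rfl⟩ := Option.map_eq_some_iff.mp hu
    rw [hemb.1]
    exact (h.2.1 i).2 w hw
  · rw [hemb.2, h.2.2 i hi]
    rfl

lemma WF_sum {EP : Set ℕ} {P : Set Rule} {G1 G2 : EG}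
    (h1 : G1.WF EP P) (h2 : G2.WF EP P) : (EGsum G1 G2).WF EP P := by
  rw [WF_iff] at *
  intro v
  rcases sum_cases G1 G2 v with ⟨u, rfl⟩ | ⟨u, rfl⟩
  · exact nodeWF_emb (sumL_emb G1 G2) (h1 u)
  · exact nodeWF_emb (sumR_emb G1 G2) (h2 u)

def EGsnoc (G : EG) (r : Rule) (p : ℕ → Option (Fin G.n)) : EG where
  n := G.n + 1
  rul v := if h : v.1 < G.n then G.rul ⟨v.1, h⟩ else r
  parent v i := if h : v.1 < G.n then (G.parent ⟨v.1, h⟩ i).map (fun u => ⟨u.1, by omega⟩)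
    else (p i).map (fun u => ⟨u.1, by omega⟩)
  topo := by
    intro v i u hu
    by_cases h : v.1 < G.n
    · rw [dif_pos h] at hu
      obtain ⟨w, hw, rfl⟩ := Option.map_eq_some_iff.mp hu
      have := G.topo _ _ _ hw
      simp only [Fin.lt_def] at *
      omega
    · rw [dif_neg h] at hu
      obtain ⟨w, hw, rfl⟩ := Option.map_eq_some_iff.mp hu
      have hw2 := w.2
      have hv : v.1 < G.n + 1 := v.2
      simp only [Fin.lt_def] at *
      omega

lemma EGsnoc_n (G : EG) (r : Rule) (p : ℕ → Option (Fin G.n)) :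
    (EGsnoc G r p).n = G.n + 1 := rfl

def snocOld (G : EG) (r : Rule) (p : ℕ → Option (Fin G.n)) (u : Fin G.n) :
    Fin (EGsnoc G r p).n := ⟨u.1, by rw [EGsnoc_n]; omega⟩

def snocNew (G : EG) (r : Rule) (p : ℕ → Option (Fin G.n)) :
    Fin (EGsnoc G r p).n := ⟨G.n, by rw [EGsnoc_n]; omega⟩

lemma snocOld_emb (G : EG) (r : Rule) (p : ℕ → Option (Fin G.n)) :
    EGemb G (EGsnoc G r p) (snocOld G r p) := by
  constructor
  · intro v
    show (if h : (v:ℕ) < G.n then _ else _) = _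
    rw [dif_pos v.2]
    exact congrArg G.rul (Fin.ext rfl)
  · intro v i
    show (if h : (v:ℕ) < G.n then _ else _) = _
    exact (dif_pos v.2).trans rfl

lemma snocNew_rul (G : EG) (r : Rule) (p : ℕ → Option (Fin G.n)) :
    (EGsnoc G r p).rul (snocNew G r p) = r := by
  show (if h : G.n < G.n then _ else _) = _
  rw [dif_neg (by omega)]

lemma snocNew_parent (G : EG) (r : Rule) (p : ℕ → Option (Fin G.n)) (i : ℕ) :
    (EGsnoc G r p).parent (snocNew G r p) i = (p i).map (snocOld G r p) := by
  show (if h : G.n < G.n then _ else _) = _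
  exact (dif_neg (by omega)).trans rfl

lemma snocNew_eval (G : EG) (r : Rule) (p : ℕ → Option (Fin G.n)) (B : Set GFact) :
    (EGsnoc G r p).eval B (snocNew G r p) =
      nodeOut r (fun i => (p i).elim B (G.eval B)) := by
  rw [EG.eval_def, snocNew_rul]
  apply congrArg
  funext i
  rw [snocNew_parent]
  cases hp : p i with
  | none => rfl
  | some u => exact (snocOld_emb G r p).eval B u

lemma snocNew_nodeWF {EP : Set ℕ} {P : Set Rule} {G : EG} {r : Rule}
    {p : ℕ → Option (Fin G.n)} (hr : r ∈ P)
    (hp : ∀ i : Fin r.body.length,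
      ((r.body.get i).pred ∈ EP ↔ p i.val = none) ∧
      ∀ u, p i.val = some u → (G.rul u).head.pred = (r.body.get i).pred)
    (hp2 : ∀ j, r.body.length ≤ j → p j = none) :
    nodeWF EP P (EGsnoc G r p) (snocNew G r p) := by
  unfold nodeWF
  rw [snocNew_rul]
  refine ⟨hr, fun i => ⟨?_, ?_⟩, fun i hi => ?_⟩
  · rw [snocNew_parent, (hp i).1]
    simp [Option.map_eq_none_iff]
  · intro u hu
    rw [snocNew_parent] at hu
    obtain ⟨w, hw, rfl⟩ := Option.map_eq_some_iff.mp hu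
    rw [((snocOld_emb G r p).1 w)]
    exact (hp i).2 w hw
  · rw [snocNew_parent, hp2 i hi]
    rfl

lemma WF_snoc {EP : Set ℕ} {P : Set Rule} {G : EG} {r : Rule}
    {p : ℕ → Option (Fin G.n)} (hG : G.WF EP P) (hr : r ∈ P)
    (hp : ∀ i : Fin r.body.length,
      ((r.body.get i).pred ∈ EP ↔ p i.val = none) ∧
      ∀ u, p i.val = some u → (G.rul u).head.pred = (r.body.get i).pred)
    (hp2 : ∀ j, r.body.length ≤ j → p j = none) :
    (EGsnoc G r p).WF EP P := by
  rw [WF_iff] at *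
  intro v
  by_cases h : v.1 < G.n
  · have : v = snocOld G r p ⟨v.1, h⟩ := Fin.ext rfl
    rw [this]
    exact nodeWF_emb (snocOld_emb G r p) (hG _)
  · have hv : v.1 < G.n + 1 := v.2
    have : v = snocNew G r p := Fin.ext (by simp only [snocNew]; omega)
    rw [this]
    exact snocNew_nodeWF hr hp hp2

lemma eval_der {P : Set Rule} {B : Set GFact} {G : EG} (hG : ∀ v, G.rul v ∈ P) :
    ∀ (v : Fin G.n) (f : GFact), f ∈ G.eval B v → Der P B f := by
  have key : ∀ k (v : Fin G.n), v.1 = k → ∀ f ∈ G.eval B v, Der P B f := by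
    intro k
    induction k using Nat.strong_induction_on with
    | _ k ih =>
      intro v hv f hf
      rw [EG.eval_def] at hf
      obtain ⟨h, hbody, rfl⟩ := hf
      apply Der.step (hG v)
      intro a ha
      obtain ⟨i, rfl⟩ := List.mem_iff_get.mp ha
      have hb := hbody i
      dsimp only at hb
      cases hp : G.parent v i.val with
      | none => rw [hp] at hb; exact Der.base hb
      | some u =>
          rw [hp] at hb
          exact ih u.1 (hv ▸ G.topo v i.val u hp) u rfl _ hb
  exact fun v => key v.1 v rfl

lemma result_der {EP : Set ℕ} {P : Set Rule} {B : Set GFact} {G : EG}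
    (hG : G.WF EP P) : ∀ f ∈ G.result B, Der P B f := by
  intro f hf
  rcases hf with hf | hf
  · exact Der.base hf
  · obtain ⟨s, ⟨v, rfl⟩, hfv⟩ := hf
    exact eval_der hG.1 v f hfv

/-- Combine a list of graphs into one preserving node evaluations. -/
lemma combine_list {EP : Set ℕ} {P : Set Rule} (B : Set GFact) :
    ∀ l : List EG, (∀ G ∈ l, G.WF EP P) →
      ∃ H : EG, H.WF EP P ∧
        ∀ G ∈ l, ∀ v : Fin G.n, ∃ w : Fin H.n, H.eval B w = G.eval B v := by
  intro l
  induction l with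
  | nil => exact fun _ => ⟨emptyEG, emptyEG_WF EP P, fun G hG => absurd hG (by simp)⟩
  | cons G0 l ih =>
      intro hl
      obtain ⟨H, hH, hHe⟩ := ih (fun G hG => hl G (List.mem_cons_of_mem _ hG))
      refine ⟨EGsum H G0, WF_sum hH (hl G0 (List.mem_cons_self)), ?_⟩
      intro G hG v
      rcases List.mem_cons.mp hG with rfl | hG
      · exact ⟨sumR H G v, (sumR_emb H G).eval B v⟩
      · obtain ⟨w, hw⟩ := hHe G hG v
        exact ⟨sumL H G0 w, ((sumL_emb H G0).eval B w).trans hw⟩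

lemma der_build {EP : Set ℕ} {P : Set Rule} {B : Set GFact}
    (hP : ProgramWF EP P) (hB : BaseInstance EP B) :
    ∀ f, Der P B f → f ∈ B ∨ ∃ G : EG, G.WF EP P ∧ ∃ v, f ∈ G.eval B v := by
  intro f hf
  induction hf with
  | base hfB => exact Or.inl hfB
  | step hr hb ih =>
    rename_i r h
    right
    have hpos : ∀ i : Fin r.body.length, ∃ G : EG, G.WF EP P ∧
        (((r.body.get i).pred ∈ EP → applyRAtom h (r.body.get i) ∈ B) ∧
         ((r.body.get i).pred ∉ EP → ∃ v, applyRAtom h (r.body.get i) ∈ G.eval B v)) := by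
      intro i
      have hai : r.body.get i ∈ r.body := r.body.get_mem i
      rcases ih _ hai with hfB | ⟨G, hG, v, hv⟩
      · exact ⟨emptyEG, emptyEG_WF EP P, fun _ => hfB,
          fun hnEP => absurd (hB _ hfB).1 hnEP⟩
      · refine ⟨G, hG, fun hEP => ?_, fun _ => ⟨v, hv⟩⟩
        have e : (r.body.get i).pred = (G.rul v).head.pred := eval_pred hv
        exact absurd (e ▸ hEP) (hP _ (hG.1 v)).1
    choose F hFwf hFb hFv using hpos
    obtain ⟨H, hH, hHe⟩ := combine_list B ((List.finRange r.body.length).map F)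
      (by
        intro G hG'
        obtain ⟨i, -, rfl⟩ := List.mem_map.mp hG'
        exact hFwf i)
    have hnode : ∀ i : Fin r.body.length, ∃ wo : Option (Fin H.n),
        ((r.body.get i).pred ∈ EP → wo = none) ∧
        ((r.body.get i).pred ∉ EP → ∃ w, wo = some w ∧
          applyRAtom h (r.body.get i) ∈ H.eval B w ∧
          (H.rul w).head.pred = (r.body.get i).pred) := by
      intro i
      by_cases hEP : (r.body.get i).pred ∈ EP
      · exact ⟨none, fun _ => rfl, fun hn => absurd hEP hn⟩
      · obtain ⟨v, hv⟩ := hFv i hEP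
        obtain ⟨w, hw⟩ := hHe (F i)
          (List.mem_map.mpr ⟨i, List.mem_finRange i, rfl⟩) v
        have hmem : applyRAtom h (r.body.get i) ∈ H.eval B w := hw ▸ hv
        exact ⟨some w, fun hEP' => absurd hEP' hEP,
          fun _ => ⟨w, rfl, hmem, (eval_pred hmem).symm⟩⟩
    choose wo hwoE hwoI using hnode
    set p : ℕ → Option (Fin H.n) :=
      fun j => if hj : j < r.body.length then wo ⟨j, hj⟩ else none with hpdef
    have hpval : ∀ i : Fin r.body.length, p i.val = wo i := by
      intro i
      simp only [hpdef, dif_pos i.2, Fin.eta]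
    refine ⟨EGsnoc H r p, ?_, snocNew H r p, ?_⟩
    · apply WF_snoc hH hr
      · intro i
        constructor
        · constructor
          · intro hEP
            rw [hpval i]
            exact hwoE i hEP
          · intro hnone
            by_contra hEP
            obtain ⟨w, hw, -, -⟩ := hwoI i hEP
            rw [hpval i, hw] at hnone
            cases hnone
        · intro u hu
          rw [hpval i] at hu
          by_cases hEP : (r.body.get i).pred ∈ EP
          · rw [hwoE i hEP] at hu
            cases hu
          · obtain ⟨w, hw, -, hpred⟩ := hwoI i hEP
            rw [hw] at hu
            cases hu
            exact hpred
      · intro j hj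
        simp only [hpdef, dif_neg (by omega : ¬ j < r.body.length)]
    · rw [snocNew_eval]
      refine ⟨h, ?_, rfl⟩
      intro i
      dsimp only
      rw [hpval i]
      by_cases hEP : (r.body.get i).pred ∈ EP
      · rw [hwoE i hEP]
        exact hFb i hEP
      · obtain ⟨w, hw, hmem, -⟩ := hwoI i hEP
        rw [hw]
        exact hmem

lemma emb_result {G H : EG} {ι : Fin G.n → Fin H.n} (hemb : EGemb G H ι)
    (B : Set GFact) : G.result B ⊆ H.result B := by
  intro f hf
  rcases hf with hf | hf
  · exact Or.inl hf
  · obtain ⟨s, ⟨v, rfl⟩, hv⟩ := hf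
    exact Or.inr (Set.mem_iUnion.mpr ⟨ι v, (hemb.eval B v).symm ▸ hv⟩)

lemma ders_to_EG {EP : Set ℕ} {P : Set Rule} {B : Set GFact}
    (hP : ProgramWF EP P) (hB : BaseInstance EP B) :
    ∀ s : Finset GFact, (∀ f ∈ s, Der P B f) →
      ∃ H : EG, H.WF EP P ∧ ∀ f ∈ s, f ∈ H.result B := by
  intro s
  induction s using Finset.induction_on with
  | empty => exact fun _ => ⟨emptyEG, emptyEG_WF EP P, by simp⟩
  | insert f s hnot ih =>
      intro hs
      obtain ⟨H, hH, hcov⟩ := ih (fun g hg => hs g (Finset.mem_insert_of_mem hg))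
      rcases der_build hP hB f (hs f (Finset.mem_insert_self f s)) with hfB | ⟨G, hG, v, hv⟩
      · refine ⟨H, hH, ?_⟩
        intro g hg
        rcases Finset.mem_insert.mp hg with rfl | hg
        · exact Or.inl hfB
        · exact hcov g hg
      · refine ⟨EGsum H G, WF_sum hH hG, ?_⟩
        intro g hg
        rcases Finset.mem_insert.mp hg with rfl | hg
        · exact Or.inr (Set.mem_iUnion.mpr ⟨sumR H G v, ((sumR_emb H G).eval B v).symm ▸ hv⟩)
        · exact emb_result (sumL_emb H G) B (hcov g hg)

lemma satBCQ_push {A C : Set GFact} {σ : GTerm → GTerm}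
    (hc : ∀ c, σ (GTerm.const c) = GTerm.const c)
    (hm : ∀ f ∈ A, f.mapT σ ∈ C) {Q : BCQ} (hQ : satBCQ A Q) : satBCQ C Q := by
  obtain ⟨h, hh⟩ := hQ
  refine ⟨fun x => σ (h x), fun a ha => ?_⟩
  have e : applyVAtom (fun x => σ (h x)) a = (applyVAtom h a).mapT σ := by
    unfold applyVAtom GFact.mapT
    simp only [List.map_map]
    congr 1
    apply List.map_congr_left
    intro t ht
    cases t <;> simp [hc, Function.comp]
  rw [e]
  exact hm _ (hh a ha)

/-- If the KB `(P,B)` admits a finite universal model, then there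
is a finite instance-dependent trigger graph for `(P,B)`. -/
theorem statement_12 (EP : Set ℕ) (P : Set Rule) (B : Set GFact)
    (hP : ProgramWF EP P) (hPfin : P.Finite) (hB : BaseInstance EP B)
    (hfin : ∃ M : Set GFact, M.Finite ∧ isUniversalModel P B M) :
    ∃ G : EG, G.WF EP P ∧ G.IsTGForKB P B := by
  obtain ⟨M, hMfin, hMmod, hMuniv⟩ := hfin
  have hDmod : isModel P B {f | Der P B f} := derSet_model P B
  obtain ⟨η, hηc, hηm⟩ := hMuniv _ hDmod
  have hSfin : ((GFact.mapT η) '' M).Finite := hMfin.image _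
  have hder : ∀ f ∈ hSfin.toFinset, Der P B f := by
    intro f hf
    rw [Set.Finite.mem_toFinset] at hf
    obtain ⟨g, hg, rfl⟩ := hf
    exact hηm g hg
  obtain ⟨H, hH, hcov⟩ := ders_to_EG hP hB hSfin.toFinset hder
  refine ⟨H, hH, ?_⟩
  intro Q
  constructor
  · intro hent
    exact satBCQ_push hηc
      (fun f hf => hcov _ (by rw [Set.Finite.mem_toFinset]; exact ⟨f, hf, rfl⟩))
      (hent M hMmod)
  · intro hQ I hI
    exact satBCQ_push (soundMap_const I)
      (fun f hf => sound_der hB hI f (result_der hH f hf)) hQ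

end TGpaper
end

section
/- For a Datalog program P, a base instance B, and an execution graph node v with head atom A(X⃗), EG-rewriting rew(v), and any 'guard' subquery Q' formed from body atoms of rew(v) covering all head variables, the optimized evaluation v(B,I) — which keeps only those derivations h with h(X⃗) an answer to Q' on B and A(h(X⃗)) ∉ I — satisfies v(B,I) = v(B) \ I for every instance I ⊆ G(B). -/
set_option maxHeartbeats 1000000

namespace TGpaper

attribute [local instance] Classical.propDecidable

/-- The instance over which an atom with tag `o` is evaluated. -/
def tagSet (G : EG) (B : Set GFact) : Option (Fin G.n) → Set GFact
  | some u => G.eval B u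
  | none => B

lemma eval_eq' (G : EG) (B : Set GFact) (v : Fin G.n) :
    G.eval B v = nodeOut (G.rul v) (fun i => tagSet G B (G.parent v i)) := by
  have hfun : (fun i =>
      match hp : G.parent v i with
      | some u => G.eval B u
      | none => B) = fun i => tagSet G B (G.parent v i) := by
    funext i
    cases h : G.parent v i <;> simp [tagSet, h]
  rw [EG.eval, hfun]

lemma inp_eq (G : EG) (B : Set GFact) (v : Fin G.n) (i : ℕ) :
    G.inp B v i = tagSet G B (G.parent v i) := by
  unfold EG.inp
  cases G.parent v i <;> rfl

lemma applyRAtom_vsub (σ : ℕ → GTerm) (θ : ℕ → ℕ) (b : RAtom) :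
    applyRAtom σ (applyVSub θ b) = applyRAtom (fun x => σ (θ x)) b := by
  simp [applyRAtom, applyVSub, List.map_map, Function.comp]

lemma applyRAtom_congr {f g : ℕ → GTerm} {b : RAtom}
    (h : ∀ x ∈ b.args, f x = g x) : applyRAtom f b = applyRAtom g b := by
  simp only [applyRAtom]
  congr 1
  exact List.map_congr_left h

lemma canon_head_datalog (r : Rule) (hr : r.isDatalog) (h : ℕ → GTerm) :
    applyRAtom (r.canon h) r.head = applyRAtom h r.head := by
  apply applyRAtom_congr
  intro x hx
  unfold Rule.canon
  rw [if_pos (hr x hx)]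

/-- One rewriting step preserves tag-interpreted answers. -/
lemma rewStep_preserve (EP : Set ℕ) (P : Set Rule) (G : EG)
    (hDat : ∀ r ∈ P, r.isDatalog) (hwf : G.WF EP P) (B : Set GFact)
    {q q' : QState G} (hs : RewStep G q q') (t : List GTerm)
    (hans : ∃ σ : ℕ → GTerm, q.headVars.map σ = t ∧
      ∀ p ∈ q.atoms, applyRAtom σ p.1 ∈ tagSet G B p.2) :
    ∃ σ : ℕ → GTerm, q'.headVars.map σ = t ∧
      ∀ p ∈ q'.atoms, applyRAtom σ p.1 ∈ tagSet G B p.2 := by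
  obtain ⟨pre, post, a, u, ρ, θ, hatoms, hρinj, hρfresh, hmgu, hhv, hatoms'⟩ := hs
  obtain ⟨σ, hσh, hσa⟩ := hans
  -- membership of the selected atom
  have hmem : (a, some u) ∈ q.atoms := by rw [hatoms]; simp
  have haU : applyRAtom σ a ∈ G.eval B u := hσa (a, some u) hmem
  rw [eval_eq'] at haU
  obtain ⟨h0, hbody, heq⟩ := haU
  have hDatU : (G.rul u).isDatalog := hDat _ (hwf.1 u)
  rw [canon_head_datalog _ hDatU] at heq
  -- the combined substitution τ
  classical
  set τ : ℕ → GTerm := fun x => if hx : ∃ y, ρ y = x then h0 hx.choose else σ x with hτ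
  have hτρ : ∀ y, τ (ρ y) = h0 y := by
    intro y
    have hx : ∃ y', ρ y' = ρ y := ⟨y, rfl⟩
    simp only [hτ, dif_pos hx]
    have := hx.choose_spec
    rw [hρinj this]
  have hτfix : ∀ x ∈ stateVars q, τ x = σ x := by
    intro x hx
    simp only [hτ]
    rw [dif_neg]
    rintro ⟨y, rfl⟩
    exact hρfresh y hx
  have havars : ∀ x ∈ a.args, x ∈ stateVars q := fun x hx =>
    Or.inr ⟨(a, some u), hmem, hx⟩
  have hunif : applyRAtom τ (applyVSub ρ (G.rul u).head) = applyRAtom τ a := by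
    rw [applyRAtom_vsub]
    calc applyRAtom (fun x => τ (ρ x)) (G.rul u).head
        = applyRAtom h0 (G.rul u).head := applyRAtom_congr (fun x _ => hτρ x)
      _ = applyRAtom σ a := heq.symm
      _ = applyRAtom τ a := (applyRAtom_congr (fun x hx => hτfix x (havars x hx))).symm
  obtain ⟨σ', hσ'⟩ := hmgu.2 τ hunif
  refine ⟨σ', ?_, ?_⟩
  · rw [hhv, List.map_map]
    rw [← hσh]
    apply List.map_congr_left
    intro x hx
    show σ' (θ x) = σ x
    rw [← hσ' x, hτfix x (Or.inl hx)]
  · intro p hp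
    rw [hatoms'] at hp
    rw [List.append_assoc] at hp
    rcases List.mem_append.mp hp with hp | hp
    · -- pre part
      obtain ⟨p0, hp0, rfl⟩ := List.mem_map.mp hp
      have hp0q : p0 ∈ q.atoms := by rw [hatoms]; exact List.mem_append_left _ hp0
      have : applyRAtom σ' (applyVSub θ p0.1) = applyRAtom σ p0.1 := by
        rw [applyRAtom_vsub]
        apply applyRAtom_congr
        intro x hx
        show σ' (θ x) = σ x
        rw [← hσ' x, hτfix x (Or.inr ⟨p0, hp0q, hx⟩)]
      rw [this]
      exact hσa p0 hp0q
    rcases List.mem_append.mp hp with hp | hp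
    · -- new body atoms
      obtain ⟨i, hi⟩ := List.mem_ofFn.mp hp
      rw [← hi]
      have : applyRAtom σ' (applyVSub θ (applyVSub ρ ((G.rul u).body.get i)))
          = applyRAtom h0 ((G.rul u).body.get i) := by
        rw [applyRAtom_vsub, applyRAtom_vsub]
        apply applyRAtom_congr
        intro x _
        show σ' (θ (ρ x)) = h0 x
        rw [← hσ' (ρ x), hτρ x]
      show applyRAtom σ' (applyVSub θ (applyVSub ρ ((G.rul u).body.get i)))
          ∈ tagSet G B (G.parent u i.val)
      rw [this]
      exact hbody i
    · -- post part
      obtain ⟨p0, hp0, rfl⟩ := List.mem_map.mp hp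
      have hp0q : p0 ∈ q.atoms := by
        rw [hatoms]
        exact List.mem_append_right _ (List.mem_cons_of_mem _ hp0)
      have : applyRAtom σ' (applyVSub θ p0.1) = applyRAtom σ p0.1 := by
        rw [applyRAtom_vsub]
        apply applyRAtom_congr
        intro x hx
        show σ' (θ x) = σ x
        rw [← hσ' x, hτfix x (Or.inr ⟨p0, hp0q, hx⟩)]
      rw [this]
      exact hσa p0 hp0q

lemma rew_sound (EP : Set ℕ) (P : Set Rule) (G : EG)
    (hDat : ∀ r ∈ P, r.isDatalog) (hwf : G.WF EP P) (B : Set GFact)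
    {q0 q : QState G} (hq : Relation.ReflTransGen (RewStep G) q0 q)
    (t : List GTerm)
    (hans : ∃ σ : ℕ → GTerm, q0.headVars.map σ = t ∧
      ∀ p ∈ q0.atoms, applyRAtom σ p.1 ∈ tagSet G B p.2) :
    ∃ σ : ℕ → GTerm, q.headVars.map σ = t ∧
      ∀ p ∈ q.atoms, applyRAtom σ p.1 ∈ tagSet G B p.2 := by
  induction hq with
  | refl => exact hans
  | tail _ hstep ih => exact rewStep_preserve EP P G hDat hwf B hstep t ih

/-- For Datalog, the optimized node evaluation `v(B,I)` guided
by any guard subquery of the EG-rewriting of `v` computes exactly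
`v(B) \\ I`, for every instance `I ⊆ G(B)`. -/
theorem statement_18 (EP : Set ℕ) (P : Set Rule) (G : EG)
    (hP : ProgramWF EP P) (hDat : ∀ r ∈ P, r.isDatalog) (hwf : G.WF EP P)
    (v : Fin G.n) (q : QState G) (hq : IsEGRewriting G v q)
    (l : List RAtom) (hl : GuardOK q l)
    (B : Set GFact) (hB : BaseInstance EP B)
    (I : Set GFact) (hI : I ⊆ G.result B) :
    G.evalOpt B I v q l = G.eval B v \ I := by
  ext f
  constructor
  · rintro ⟨h, hbody, hf, -, hnI⟩
    refine ⟨?_, hnI⟩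
    rw [eval_eq']
    refine ⟨h, ?_, hf⟩
    intro i
    have := hbody i
    rwa [inp_eq] at this
  · rintro ⟨hf, hnI⟩
    have hf' := hf
    rw [eval_eq'] at hf'
    obtain ⟨h, hbody, heq⟩ := hf'
    refine ⟨h, ?_, heq, ?_, hnI⟩
    · intro i
      rw [inp_eq]
      exact hbody i
    · -- guard condition via the rewriting soundness
      have hinit : ∃ σ : ℕ → GTerm,
          (initState G v).headVars.map σ =
            (G.rul v).head.args.map ((G.rul v).canon h) ∧
          ∀ p ∈ (initState G v).atoms, applyRAtom σ p.1 ∈ tagSet G B p.2 := by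
        refine ⟨(G.rul v).canon h, rfl, ?_⟩
        intro p hp
        simp only [initState, List.mem_singleton] at hp
        subst hp
        show applyRAtom ((G.rul v).canon h) (G.rul v).head ∈ G.eval B v
        rw [← heq]
        exact hf
      obtain ⟨σ, hσh, hσa⟩ := rew_sound EP P G hDat hwf B hq.1 _ hinit
      refine ⟨σ, hσh, ?_⟩
      intro a ha
      obtain ⟨o, ho⟩ := hl.1 a ha
      have hnone := hq.2 _ ho
      have := hσa _ ho
      rw [hnone] at this
      exact this

end TGpaper
end
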